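/- A primitive symbolic substitution system (𝒜, σ) in which some letter a satisfies |σ(a)| > 1 admits an orbit: there exists a bi-infinite sequence of bi-infinite words (ω^i)_{i∈ℤ} and monotone surjective maps P_i : ℤ → ℤ such that ω^i produces ω^{i+1} with respect to P_i. -/

import Mathlib

/-- `ω` produces `ω'` with respect to the monotone surjective parent function
`P`. -/
def Produces {A : Type*} (σ : A → List A) (ω ω' : ℤ → A) (P : ℤ → ℤ) : Prop :=
  Monotone P ∧ Function.Surjective P ∧
  ∀ j m M : ℤ, IsLeast {s | P s = j} m → IsGreatest {s | P s = j} M →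
    M - m + 1 = ((σ (ω j)).length : ℤ) ∧
    ∀ t, m ≤ t → t ≤ M → ω' t = (σ (ω j)).getD (t - m).toNat (ω j)

/-!
Take `k > 0` and letters `c`, `d` such that `σᵏ(c)` begins with `c`, `σᵏ(d)` ends with `d`, and
both are longer than one letter: `c` and `d` are periodic points of the first- and last-letter
maps (primitivity makes the alphabet finite), and primitivity together with the expanding letter
makes all long iterates longer than one letter. The words `σⁿᵏ(c)` then increase to a
right-infinite word and the words `σⁿᵏ(d)` to a left-infinite one; their concatenation `ω`, split
at position `0`, is fixed by `σᵏ` when images are anchored so that the block of position `0`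
starts at `0`. So `ω` lies on a periodic orbit of the anchored image, which can be indexed by `ℤ`.
Reflecting words turns the left half into a right half, for the reversed substitution.
-/

open Function

theorem Function.exists_isPeriodicPt_of_finite {α : Type*} [Finite α] (f : α → α) (x : α) :
    ∃ y n, 0 < n ∧ IsPeriodicPt f n y := by
  obtain ⟨i, j, hij, h⟩ := Finite.exists_ne_map_eq_of_infinite (f^[·] x)
  wlog hlt : i < j generalizing i j
  · exact this j i hij.symm h.symm (by omega)
  refine ⟨f^[i] x, j - i, by omega, ?_⟩
  rw [IsPeriodicPt, IsFixedPt, ← iterate_add_apply, Nat.sub_add_cancel hlt.le]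
  exact h.symm

theorem Function.IsPeriodicPt.exists_int_orbit {α : Type*} {f : α → α} {k : ℕ} {x : α}
    (h : IsPeriodicPt f k x) (hk : 0 < k) : ∃ g : ℤ → α, ∀ i, g (i + 1) = f (g i) := by
  refine ⟨fun i => f^[(i % k).toNat] x, fun i => ?_⟩
  have hmod : ((i + 1) % k).toNat = ((i % k).toNat + 1) % k := by
    have := Int.emod_nonneg i (by omega : (k : ℤ) ≠ 0)
    rw [← Int.emod_add_emod, ← Int.toNat_of_nonneg this]
    exact_mod_cast Int.toNat_natCast _
  simp only [hmod, h.iterate_mod_apply, iterate_succ_apply']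

namespace Substitution

open Finset

variable {A : Type*}

section Blocks

/-- Blocks of lengths `ℓ j` tiling `ℤ`: block `j` is `[blockStart ℓ j, blockStart ℓ (j + 1))`
and block `0` starts at `0`. -/
noncomputable def blockStart (ℓ : ℤ → ℤ) (j : ℤ) : ℤ :=
  ∑ i ∈ Ico 0 j, ℓ i - ∑ i ∈ Ico j 0, ℓ i

noncomputable def blockIndex (ℓ : ℤ → ℤ) (t : ℤ) : ℤ := sSup {j | blockStart ℓ j ≤ t}

variable {ℓ : ℤ → ℤ}

@[simp] lemma blockStart_zero : blockStart ℓ 0 = 0 := by simp [blockStart]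

lemma blockStart_add_one (j : ℤ) : blockStart ℓ (j + 1) = blockStart ℓ j + ℓ j := by
  unfold blockStart
  rcases le_or_gt 0 j with hj | hj
  · rw [Ico_add_one_right_eq_Icc, ← sum_Ico_add_eq_sum_Icc hj, Ico_eq_empty_of_le hj,
      Ico_eq_empty_of_le (show (0 : ℤ) ≤ j + 1 by omega)]
    ring
  · rw [Ico_add_one_left_eq_Ioo, ← sum_Ioo_add_eq_sum_Ico hj, Ico_eq_empty_of_le hj.le,
      Ico_eq_empty_of_le (show j + 1 ≤ 0 by omega)]
    ring

lemma eq_blockStart {f : ℤ → ℤ} (h₀ : f 0 = 0) (hsucc : ∀ j, f (j + 1) = f j + ℓ j) :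
    f = blockStart ℓ := by
  funext j
  induction j using Int.induction_on with
  | zero => simp [h₀]
  | succ n ih => rw [hsucc, blockStart_add_one, ih]
  | pred n ih =>
    have h₁ := hsucc (-n - 1)
    have h₂ := blockStart_add_one (ℓ := ℓ) (-n - 1)
    rw [sub_add_cancel] at h₁ h₂
    linarith

lemma blockStart_reflect (j : ℤ) :
    blockStart (fun i => ℓ (-1 - i)) j = -blockStart ℓ (-j) := by
  refine congrFun (eq_blockStart (f := fun j => -blockStart ℓ (-j)) (by simp) fun i => ?_).symm j
  have := blockStart_add_one (ℓ := ℓ) (-1 - i)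
  rw [show -1 - i + 1 = -i by ring] at this
  simp only [show -(i + 1) = -1 - i by ring]
  linarith

lemma sub_le_blockStart_sub (hℓ : ∀ j, 0 < ℓ j) {i j : ℤ} (hij : i ≤ j) :
    j - i ≤ blockStart ℓ j - blockStart ℓ i := by
  induction j, hij using Int.leInduction with
  | base => simp
  | succ j _ ih => have := hℓ j; rw [blockStart_add_one]; omega

lemma blockStart_strictMono (hℓ : ∀ j, 0 < ℓ j) : StrictMono (blockStart ℓ) :=
  strictMono_int_of_lt_succ fun j => by have := hℓ j; rw [blockStart_add_one]; omega

lemma blockStart_blockIndex_le_and_lt (hℓ : ∀ j, 0 < ℓ j) (t : ℤ) :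
    blockStart ℓ (blockIndex ℓ t) ≤ t ∧ t < blockStart ℓ (blockIndex ℓ t + 1) := by
  have hbdd : BddAbove {j | blockStart ℓ j ≤ t} := ⟨max 0 t, fun j (hj : _ ≤ t) => by
    by_contra! h
    have := sub_le_blockStart_sub hℓ (show 0 ≤ j by omega)
    simp only [blockStart_zero] at this
    omega⟩
  have hmem : min 0 t ∈ {j | blockStart ℓ j ≤ t} := by
    have := sub_le_blockStart_sub hℓ (show min 0 t ≤ 0 by omega)
    simp only [blockStart_zero] at this
    simp only [Set.mem_ofPred_eq]
    omega
  refine ⟨Int.csSup_mem ⟨_, hmem⟩ hbdd, lt_of_not_ge fun h => ?_⟩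
  have := le_csSup hbdd (show blockIndex ℓ t + 1 ∈ {j | blockStart ℓ j ≤ t} from h)
  exact (lt_add_one _).not_ge this

lemma blockIndex_eq (hℓ : ∀ j, 0 < ℓ j) {t j : ℤ} (h₁ : blockStart ℓ j ≤ t)
    (h₂ : t < blockStart ℓ (j + 1)) : blockIndex ℓ t = j := by
  obtain ⟨h₃, h₄⟩ := blockStart_blockIndex_le_and_lt hℓ t
  have := (blockStart_strictMono hℓ).lt_iff_lt.mp (h₁.trans_lt h₄)
  have := (blockStart_strictMono hℓ).lt_iff_lt.mp (h₃.trans_lt h₂)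
  omega

lemma blockIndex_monotone (hℓ : ∀ j, 0 < ℓ j) : Monotone (blockIndex ℓ) := fun s t hst => by
  have h₁ := (blockStart_blockIndex_le_and_lt hℓ s).1
  have h₂ := (blockStart_blockIndex_le_and_lt hℓ t).2
  have := (blockStart_strictMono hℓ).lt_iff_lt.mp ((h₁.trans hst).trans_lt h₂)
  omega

lemma blockIndex_blockStart (hℓ : ∀ j, 0 < ℓ j) (j : ℤ) : blockIndex ℓ (blockStart ℓ j) = j :=
  blockIndex_eq hℓ le_rfl (blockStart_strictMono hℓ (lt_add_one j))

lemma isLeast_blockIndex_eq (hℓ : ∀ j, 0 < ℓ j) (j : ℤ) :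
    IsLeast {s | blockIndex ℓ s = j} (blockStart ℓ j) :=
  ⟨blockIndex_blockStart hℓ j, fun s (hs : _ = j) =>
    hs ▸ (blockStart_blockIndex_le_and_lt hℓ s).1⟩

lemma isGreatest_blockIndex_eq (hℓ : ∀ j, 0 < ℓ j) (j : ℤ) :
    IsGreatest {s | blockIndex ℓ s = j} (blockStart ℓ (j + 1) - 1) := by
  refine ⟨blockIndex_eq hℓ ?_ (by omega), fun s (hs : _ = j) => ?_⟩
  · have := blockStart_strictMono hℓ (lt_add_one j); omega
  · have := (blockStart_blockIndex_le_and_lt hℓ s).2; rw [hs] at this; omega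

end Blocks

section Words

def substList (σ : A → List A) (w : List A) : List A := w.flatMap σ

def rev (σ : A → List A) (a : A) : List A := (σ a).reverse

variable (σ : A → List A)

@[simp] lemma substList_nil : substList σ [] = [] := rfl

@[simp] lemma substList_cons (a : A) (w : List A) :
    substList σ (a :: w) = σ a ++ substList σ w := rfl

@[simp] lemma substList_singleton (a : A) : substList σ [a] = σ a := List.flatMap_singleton ..

lemma substList_append (v w : List A) :
    substList σ (v ++ w) = substList σ v ++ substList σ w := List.flatMap_append

lemma iterate_substList_append (n : ℕ) (v w : List A) :
    (substList σ)^[n] (v ++ w) = (substList σ)^[n] v ++ (substList σ)^[n] w := by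
  induction n with
  | zero => rfl
  | succ n ih => rw [iterate_succ_apply', ih, substList_append, iterate_succ_apply',
      iterate_succ_apply']

lemma length_le_length_substList_of_mem {a : A} {w : List A} (h : a ∈ w) :
    (σ a).length ≤ (substList σ w).length := by
  obtain ⟨v, v', rfl⟩ := List.append_of_mem h
  simp only [substList_append, substList_cons, List.length_append]
  omega

lemma substList_rev_reverse (w : List A) :
    substList (rev σ) w.reverse = (substList σ w).reverse := by
  induction w with
  | nil => rfl
  | cons a w ih => simp [substList_append, ih, rev]

lemma length_iterate_substList_rev (n : ℕ) (a : A) :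
    ((substList (rev σ))^[n] [a]).length = ((substList σ)^[n] [a]).length := by
  have := Semiconj.iterate_right (f := List.reverse)
    (fun w => (substList_rev_reverse σ w).symm) n [a]
  rw [List.reverse_singleton] at this
  rw [← this, List.length_reverse]

variable {σ}

lemma iterate_substList_ne_nil (hne : ∀ a, σ a ≠ []) (n : ℕ) {w : List A} (hw : w ≠ []) :
    (substList σ)^[n] w ≠ [] := by
  induction n with
  | zero => exact hw
  | succ n ih =>
    obtain ⟨a, v, hav⟩ := List.exists_cons_of_ne_nil ih
    simp [iterate_succ_apply', hav, hne a]

lemma rev_ne_nil (hne : ∀ a, σ a ≠ []) (a : A) : rev σ a ≠ [] := by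
  simpa [rev] using hne a

lemma head?_iterate_substList (hne : ∀ a, σ a ≠ []) (n : ℕ) (a : A) :
    ((substList σ)^[n] [a]).head? = some ((fun b => (σ b).headD b)^[n] a) := by
  induction n with
  | zero => rfl
  | succ n ih =>
    obtain ⟨b, v, hbv⟩ := List.exists_cons_of_ne_nil (iterate_substList_ne_nil hne n
      (List.cons_ne_nil a []))
    obtain ⟨c, v', hcv⟩ := List.exists_cons_of_ne_nil (hne b)
    rw [hbv] at ih
    simp_all [iterate_succ_apply']

end Words

section Image

def blockLengths (σ : A → List A) (u : ℤ → A) (j : ℤ) : ℤ := (σ (u j)).length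

noncomputable def image (σ : A → List A) (u : ℤ → A) (t : ℤ) : A :=
  let ℓ := blockLengths σ u
  let j := blockIndex ℓ t
  (σ (u j)).getD (t - blockStart ℓ j).toNat (u j)

def reflect (u : ℤ → A) (t : ℤ) : A := u (-1 - t)

variable {σ : A → List A}

lemma blockLengths_pos (hne : ∀ a, σ a ≠ []) (u : ℤ → A) (j : ℤ) : 0 < blockLengths σ u j := by
  simpa [blockLengths, List.length_pos_iff] using hne (u j)

lemma image_eq (hne : ∀ a, σ a ≠ []) (u : ℤ → A) {t j : ℤ}
    (h₁ : blockStart (blockLengths σ u) j ≤ t) (h₂ : t < blockStart (blockLengths σ u) (j + 1)) :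
    image σ u t = (σ (u j)).getD (t - blockStart (blockLengths σ u) j).toNat (u j) := by
  simp only [image, blockIndex_eq (blockLengths_pos hne u) h₁ h₂]

lemma image_blockStart_add (hne : ∀ a, σ a ≠ []) (u : ℤ → A) (j : ℤ) {i : ℕ}
    (hi : i < (σ (u j)).length) :
    image σ u (blockStart (blockLengths σ u) j + i) = (σ (u j))[i] := by
  have := blockStart_add_one (ℓ := blockLengths σ u) j
  rw [image_eq hne u (j := j) (by omega) (by rw [this, blockLengths]; omega)]
  simp [hi]

theorem produces_image (hne : ∀ a, σ a ≠ []) (u : ℤ → A) :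
    Produces σ u (image σ u) (blockIndex (blockLengths σ u)) := by
  have hℓ := blockLengths_pos hne u
  refine ⟨blockIndex_monotone hℓ, fun j => ⟨_, blockIndex_blockStart hℓ j⟩,
    fun j m M hm hM => ?_⟩
  obtain rfl := hm.unique (isLeast_blockIndex_eq hℓ j)
  obtain rfl := hM.unique (isGreatest_blockIndex_eq hℓ j)
  have := blockStart_add_one (ℓ := blockLengths σ u) j
  exact ⟨by rw [this, blockLengths]; ring, fun t h₁ h₂ => image_eq hne u h₁ (by omega)⟩

lemma image_rev_reflect (hne : ∀ a, σ a ≠ []) (u : ℤ → A) :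
    image (rev σ) (reflect u) = reflect (image σ u) := by
  have hℓ : blockLengths (rev σ) (reflect u) = fun j => blockLengths σ u (-1 - j) := by
    funext j; simp [blockLengths, rev, reflect]
  funext t
  obtain ⟨h₁, h₂⟩ := blockStart_blockIndex_le_and_lt (blockLengths_pos hne u) (-1 - t)
  set j := blockIndex (blockLengths σ u) (-1 - t)
  have hL := blockStart_add_one (ℓ := blockLengths σ u) j
  rw [blockLengths] at hL
  -- `-1 - t` is the `i`-th position of block `j` of `image σ u`, so `t` is the `i`-th position
  -- from the right of block `-1 - j` of `image (rev σ) (reflect u)`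
  obtain ⟨i, hi⟩ : ∃ i : ℕ, -1 - t = blockStart (blockLengths σ u) j + i :=
    ⟨(-1 - t - blockStart (blockLengths σ u) j).toNat, by omega⟩
  have hiL : i < (σ (u j)).length := by omega
  have ht : t = blockStart (blockLengths (rev σ) (reflect u)) (-1 - j) +
      ((σ (u j)).length - 1 - i : ℕ) := by
    rw [hℓ, blockStart_reflect]
    simp only [neg_sub, sub_neg_eq_add]
    omega
  rw [reflect, hi, image_blockStart_add hne u j hiL, ht,
    image_blockStart_add (rev_ne_nil hne) _ _ (by simp [rev, reflect]; omega)]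
  simp only [rev, reflect, sub_sub_cancel, List.getElem_reverse]
  congr 1
  omega

end Image

section Prefixes

def StartsWith (u : ℤ → A) (w : List A) : Prop := ∀ i (hi : i < w.length), u i = w[i]

variable {σ : A → List A} {u : ℤ → A} {v w : List A}

lemma StartsWith.mono (h : StartsWith u w) (hvw : v <+: w) : StartsWith u v := fun i hi => by
  rw [h i (hi.trans_le hvw.length_le), hvw.getElem hi]

lemma startsWith_append :
    StartsWith u (v ++ w) ↔ StartsWith u v ∧ ∀ i (hi : i < w.length), u (v.length + i) = w[i] := by
  refine ⟨fun h => ⟨h.mono (List.prefix_append v w), fun i hi => ?_⟩, fun ⟨hv, hw⟩ i hi => ?_⟩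
  · have := h (v.length + i) (by simp; omega)
    rw [Nat.cast_add, List.getElem_append_right (by omega)] at this
    simpa using this
  · rcases lt_or_ge i v.length with hiv | hiv
    · rw [hv i hiv, List.getElem_append_left hiv]
    · obtain ⟨i, rfl⟩ := Nat.exists_eq_add_of_le hiv
      simp only [List.length_append] at hi
      rw [Nat.cast_add, hw i (by omega), List.getElem_append_right (by omega)]
      simp

lemma startsWith_append_singleton {a : A} :
    StartsWith u (w ++ [a]) ↔ StartsWith u w ∧ u w.length = a := by
  simp [startsWith_append]

lemma StartsWith.length_substList (h : StartsWith u w) :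
    ((substList σ w).length : ℤ) = blockStart (blockLengths σ u) w.length := by
  induction w using List.reverseRecOn with
  | nil => simp
  | append_singleton w a ih =>
    obtain ⟨hw, ha⟩ := startsWith_append_singleton.mp h
    rw [substList_append, List.length_append, Nat.cast_add, ih hw, List.length_append,
      List.length_singleton, Nat.cast_add, Nat.cast_one, blockStart_add_one, blockLengths, ha,
      substList_singleton]

lemma StartsWith.image_substList (hne : ∀ a, σ a ≠ []) (h : StartsWith u w) :
    StartsWith (image σ u) (substList σ w) := by
  induction w using List.reverseRecOn with
  | nil => simp [StartsWith]
  | append_singleton w a ih =>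
    obtain ⟨hw, ha⟩ := startsWith_append_singleton.mp h
    rw [substList_append, startsWith_append, hw.length_substList, substList_singleton, ← ha]
    exact ⟨ih hw, fun i hi => image_blockStart_add hne u w.length hi⟩

lemma StartsWith.iterate_image_substList (hne : ∀ a, σ a ≠ []) (h : StartsWith u w) (n : ℕ) :
    StartsWith ((image σ)^[n] u) ((substList σ)^[n] w) := by
  induction n with
  | zero => exact h
  | succ n ih => rw [iterate_succ_apply', iterate_succ_apply']; exact ih.image_substList hne

lemma exists_startsWith_of_isPrefix {W : ℕ → List A} (hW : ∀ n, W n <+: W (n + 1))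
    (hlen : ∀ n, n < (W n).length) : ∃ u : ℤ → A, ∀ n, StartsWith u (W n) := by
  have hmono {m n : ℕ} (h : m ≤ n) : W m <+: W n := by
    induction n, h using Nat.le_induction with
    | base => exact List.prefix_refl _
    | succ n _ ih => exact ih.trans (hW n)
  refine ⟨fun t => (W (t.toNat + 1))[t.toNat]'((Nat.lt_add_one _).trans (hlen _)), ?_⟩
  intro n i hi
  simp only [Int.toNat_natCast]
  rcases le_total (i + 1) n with h | h
  · exact (hmono h).getElem _
  · exact ((hmono h).getElem hi).symm

lemma eq_of_startsWith {W : ℕ → List A} (hlen : ∀ n, n < (W n).length) {v : ℤ → A}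
    (hu : ∀ n, StartsWith u (W n)) (hv : ∀ n, StartsWith v (W n)) (i : ℕ) : u i = v i := by
  rw [hu i i (hlen i), hv i i (hlen i)]

end Prefixes

section Towers

variable {σ : A → List A} {k : ℕ} {c : A} {l : List A}

lemma iterate_substList_succ_mul (hc : (substList σ)^[k] [c] = c :: l) (n : ℕ) :
    (substList σ)^[(n + 1) * k] [c] = (substList σ)^[n * k] [c] ++ (substList σ)^[n * k] l := by
  rw [add_one_mul, iterate_add_apply, hc, ← List.singleton_append, iterate_substList_append]

lemma lt_length_iterate_substList_mul (hne : ∀ a, σ a ≠ [])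
    (hc : (substList σ)^[k] [c] = c :: l) (hl : l ≠ []) (n : ℕ) :
    n < ((substList σ)^[n * k] [c]).length := by
  induction n with
  | zero => simp
  | succ n ih =>
    rw [iterate_substList_succ_mul hc, List.length_append]
    have := List.length_pos_iff.mpr (iterate_substList_ne_nil hne (n * k) hl)
    omega

lemma iterate_image_startsWith_iterate_substList_mul (hne : ∀ a, σ a ≠ [])
    (hc : (substList σ)^[k] [c] = c :: l) {u : ℤ → A}
    (hu : ∀ n, StartsWith u ((substList σ)^[n * k] [c])) (n : ℕ) :
    StartsWith ((image σ)^[k] u) ((substList σ)^[n * k] [c]) := by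
  have := (hu n).iterate_image_substList hne k
  rw [← iterate_add_apply, show k + n * k = (n + 1) * k by ring,
    iterate_substList_succ_mul hc] at this
  exact this.mono (List.prefix_append _ _)

theorem exists_isPeriodicPt_image (hne : ∀ a, σ a ≠ []) {c d : A} {l l' : List A}
    (hc : (substList σ)^[k] [c] = c :: l) (hl : l ≠ [])
    (hd : (substList (rev σ))^[k] [d] = d :: l') (hl' : l' ≠ []) :
    ∃ ω, IsPeriodicPt (image σ) k ω := by
  have hne' := rev_ne_nil hne
  have hlen := lt_length_iterate_substList_mul hne hc hl
  have hlen' := lt_length_iterate_substList_mul hne' hd hl'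
  obtain ⟨u, hu⟩ := exists_startsWith_of_isPrefix
    (fun n => ⟨_, (iterate_substList_succ_mul hc n).symm⟩) hlen
  obtain ⟨v, hv⟩ := exists_startsWith_of_isPrefix
    (fun n => ⟨_, (iterate_substList_succ_mul hd n).symm⟩) hlen'
  let ω : ℤ → A := fun t => if 0 ≤ t then u t else v (-1 - t)
  have hω n : StartsWith ω ((substList σ)^[n * k] [c]) := fun i hi => by
    simp [ω, hu n i hi]
  have hω' n : StartsWith (reflect ω) ((substList (rev σ))^[n * k] [d]) := fun i hi => by
    simp [reflect, ω, hv n i hi, show ¬(i : ℤ) ≤ -1 by omega]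
  refine ⟨ω, funext fun t => ?_⟩
  rcases le_or_gt 0 t with ht | ht
  · lift t to ℕ using ht
    exact eq_of_startsWith hlen (iterate_image_startsWith_iterate_substList_mul hne hc hω) hω t
  · obtain ⟨n, rfl⟩ : ∃ n : ℕ, t = -1 - n := ⟨(-1 - t).toNat, by omega⟩
    have := eq_of_startsWith hlen'
      (iterate_image_startsWith_iterate_substList_mul hne' hd hω') hω' n
    rwa [← (Semiconj.iterate_right (fun u => (image_rev_reflect hne u).symm) k) ω] at this

end Towers

section Seeds

variable {σ : A → List A}

lemma ne_nil_of_primitive {N : ℕ} (hN : ∀ m, N < m → ∀ a b : A, b ∈ (substList σ)^[m] [a])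
    (a : A) : σ a ≠ [] := fun h => by
  have := hN (N + 1) (by omega) a a
  rw [iterate_succ_apply, substList_singleton, h, iterate_fixed (substList_nil σ)] at this
  exact List.not_mem_nil this

lemma one_lt_length_of_primitive {N : ℕ}
    (hN : ∀ m, N < m → ∀ a b : A, b ∈ (substList σ)^[m] [a]) {a : A} (ha : 1 < (σ a).length)
    {m : ℕ} (hm : N + 1 < m) (x : A) : 1 < ((substList σ)^[m] [x]).length := by
  obtain ⟨m, rfl⟩ : ∃ m', m = m' + 1 := ⟨m - 1, by omega⟩
  rw [iterate_succ_apply']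
  exact ha.trans_le (length_le_length_substList_of_mem σ (hN m (by omega) x a))

lemma exists_iterate_substList_eq_cons (hne : ∀ a, σ a ≠ []) {n : ℕ} {c : A}
    (hc : IsPeriodicPt (fun b => (σ b).headD b) n c)
    (hlen : 1 < ((substList σ)^[n] [c]).length) :
    ∃ l ≠ [], (substList σ)^[n] [c] = c :: l := by
  obtain ⟨l, hl⟩ := List.head?_eq_some_iff.mp (hc.eq ▸ head?_iterate_substList hne n c)
  refine ⟨l, fun h => ?_, hl⟩
  simp [hl, h] at hlen

end Seeds

end Substitution

open Substitution Function

theorem orbit_exists_general {A : Type*}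
    (σ : A → List A)
    (hprim : ∃ N : ℕ, ∀ m : ℕ, N < m → ∀ a b : A,
      b ∈ (fun u => u.flatMap σ)^[m] [a])
    (hexp : ∃ a : A, 1 < (σ a).length) :
    ∃ (ω : ℤ → ℤ → A) (P : ℤ → ℤ → ℤ),
      ∀ i : ℤ, Produces σ (ω i) (ω (i + 1)) (P i) := by
  obtain ⟨N, hN⟩ := hprim
  obtain ⟨a, ha⟩ := hexp
  have hne := ne_nil_of_primitive hN
  have : Finite A := by
    classical exact @Finite.of_fintype _ (Fintype.ofList _ (hN (N + 1) (by omega) a))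
  obtain ⟨c, p, hp, hc⟩ := exists_isPeriodicPt_of_finite (fun b => (σ b).headD b) a
  obtain ⟨d, q, hq, hd⟩ := exists_isPeriodicPt_of_finite (fun b => (rev σ b).headD b) a
  have hk : N + 1 < p * q * (N + 2) :=
    (N + 1).lt_add_one.trans_le (Nat.le_mul_of_pos_left _ (Nat.mul_pos hp hq))
  obtain ⟨l, hl, hcl⟩ := exists_iterate_substList_eq_cons hne ((hc.mul_const q).mul_const (N + 2))
    (one_lt_length_of_primitive hN ha hk c)
  obtain ⟨l', hl', hdl'⟩ := exists_iterate_substList_eq_cons (rev_ne_nil hne)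
    ((hd.const_mul p).mul_const (N + 2))
    (length_iterate_substList_rev σ _ d ▸ one_lt_length_of_primitive hN ha hk d)
  obtain ⟨ω₀, hω₀⟩ := exists_isPeriodicPt_image hne hcl hl hdl' hl'
  obtain ⟨ω, hω⟩ := hω₀.exists_int_orbit (by omega)
  exact ⟨ω, fun i => blockIndex (blockLengths σ (ω i)), fun i => hω i ▸ produces_image hne (ω i)⟩

/-- A primitive symbolic substitution system with an expanding letter admits an
orbit. -/
theorem orbit_exists {A : Type*} [Fintype A] [Nonempty A]
    (σ : A → List A)
    (hprim : ∃ N : ℕ, ∀ m : ℕ, N < m → ∀ a b : A,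
      b ∈ (fun u => u.flatMap σ)^[m] [a])
    (hexp : ∃ a : A, 1 < (σ a).length) :
    ∃ (ω : ℤ → ℤ → A) (P : ℤ → ℤ → ℤ),
      ∀ i : ℤ, Produces σ (ω i) (ω (i + 1)) (P i) :=
  orbit_exists_general σ hprim hexp
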